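/- arXiv:2605.24387 — 4 statements merged into one kernel-verified Lean document; each statement's English description precedes it below -/
import Mathlib

section
/- For real α with 1 < α < 2, the WSGD weights for (p,q) = (1,0) satisfy w_k^{(α)} ≥ 0 for all k ≥ 3, and 1 ≥ w₀^{(α)} ≥ w₃^{(α)} ≥ w₄^{(α)} ≥ ⋯ ≥ 0. -/
/-- For α ∈ (1,2), the WSGD weights for (p,q)=(1,0) satisfy
w_k ≥ 0 for all k ≥ 3, and 1 ≥ w₀ ≥ w₃ ≥ w₄ ≥ ⋯ ≥ 0. -/
theorem wsgd_10_monotone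
    (α : ℝ) (hα1 : 1 < α) (hα2 : α < 2)
    (g w : ℕ → ℝ) (hg0 : g 0 = 1)
    (hg : ∀ k : ℕ, g (k + 1) = (1 - (α + 1) / (k + 1)) * g k)
    (hw0 : w 0 = (α / 2) * g 0)
    (hw : ∀ k : ℕ, w (k + 1) = (α / 2) * g (k + 1) + ((2 - α) / 2) * g k) :
    (∀ k : ℕ, 3 ≤ k → 0 ≤ w k) ∧ w 0 ≤ 1 ∧ w 3 ≤ w 0 ∧
    (∀ k : ℕ, 3 ≤ k → w (k + 1) ≤ w k) := by
  have hg1 : g 1 = -α := by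
    have := hg 0; rw [hg0] at this; push_cast at this; linarith
  have hg2 : g 2 = α * (α - 1) / 2 := by
    have := hg 1; rw [hg1] at this; push_cast at this; field_simp at this; linarith
  -- positivity of g k for k ≥ 2
  have hpos : ∀ k : ℕ, 2 ≤ k → 0 ≤ g k := by
    intro k hk
    induction k with
    | zero => omega
    | succ n ih =>
      rcases Nat.lt_or_ge n 2 with h | h
      · interval_cases n
        · omega
        · rw [hg2]; nlinarith
      · have hgn := ih (by omega)
        rw [hg n]
        have hn : (2:ℝ) ≤ (n:ℝ) := by exact_mod_cast h
        have hc : 0 ≤ 1 - (α + 1) / (n + 1) := by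
          rw [sub_nonneg, div_le_one (by linarith)]; linarith
        positivity
  -- g decreasing for k ≥ 2
  have hdec : ∀ k : ℕ, 2 ≤ k → g (k + 1) ≤ g k := by
    intro k hk
    rw [hg k]
    have hgn := hpos k hk
    have hc : 1 - (α + 1) / (k + 1) ≤ 1 := by
      have : 0 ≤ (α + 1) / ((k:ℝ) + 1) := by positivity
      linarith
    nlinarith
  have hwpos : ∀ k : ℕ, 3 ≤ k → 0 ≤ w k := by
    intro k hk
    obtain ⟨m, rfl⟩ : ∃ m, k = m + 1 := ⟨k - 1, by omega⟩
    rw [hw m]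
    have h1 := hpos m (by omega)
    have h2 := hpos (m + 1) (by omega)
    nlinarith
  refine ⟨hwpos, ?_, ?_, ?_⟩
  · rw [hw0, hg0]; linarith
  · have hg3 : g 3 = (1 - (α + 1) / 3) * g 2 := by
      have := hg 2; push_cast at this; norm_num at this ⊢; linarith
    rw [hw 2, hw0, hg0, hg3, hg2]
    nlinarith [sq_nonneg (α - 1), sq_nonneg (2 - α), sq_nonneg ((α-1)*(2-α)), mul_pos (sub_pos.2 hα1) (sub_pos.2 hα2)]
  · intro k hk
    obtain ⟨m, rfl⟩ : ∃ m, k = m + 1 := ⟨k - 1, by omega⟩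
    rw [hw (m + 1), hw m]
    have h1 := hdec (m + 1) (by omega)
    have h2 := hdec m (by omega)
    nlinarith
end

section
/- For real α with 1 < α < 2, the WSGD weights for (p,q) = (1,0) satisfy ∑_{k=0}^∞ w_k^{(α)} = 0 and ∑_{k=0}^m w_k^{(α)} < 0 for every m ≥ 2. -/
/-- For α ∈ (1,2), the WSGD weights for (p,q)=(1,0) satisfy
∑_{k=0}^∞ w_k = 0 and ∑_{k=0}^m w_k < 0 for every m ≥ 2. -/
theorem wsgd_10_sums
    (α : ℝ) (hα1 : 1 < α) (hα2 : α < 2)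
    (g w : ℕ → ℝ) (hg0 : g 0 = 1)
    (hg : ∀ k : ℕ, g (k + 1) = (1 - (α + 1) / (k + 1)) * g k)
    (hw0 : w 0 = (α / 2) * g 0)
    (hw : ∀ k : ℕ, w (k + 1) = (α / 2) * g (k + 1) + ((2 - α) / 2) * g k) :
    HasSum w 0 ∧ ∀ m : ℕ, 2 ≤ m → (∑ k ∈ Finset.range (m + 1), w k) < 0 := by
  set S : ℕ → ℝ := fun m => ∑ k ∈ Finset.range (m + 1), g k with hSdef
  have hSsucc : ∀ m : ℕ, S (m + 1) = S m + g (m + 1) := by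
    intro m; simp [hSdef, Finset.sum_range_succ]
  have hS0 : S 0 = 1 := by simp [hSdef, hg0]
  -- key identity : (m+1) g(m+1) = -α S m
  have hA : ∀ m : ℕ, ((m : ℝ) + 1) * g (m + 1) = -α * S m := by
    intro m
    induction m with
    | zero =>
      have := hg 0
      simp only [Nat.cast_zero] at this ⊢
      rw [this, hS0, hg0]; ring
    | succ n ih =>
      have h1 := hg (n + 1)
      have hne : ((n : ℝ) + 1 + 1) ≠ 0 := by positivity
      push_cast at h1 ⊢
      rw [h1, hSsucc n]
      field_simp
      nlinarith [ih]
  have hgsucc : ∀ m : ℕ, g (m + 1) = -α * S m / ((m : ℝ) + 1) := by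
    intro m
    have hne : ((m : ℝ) + 1) ≠ 0 := by positivity
    field_simp
    linarith [hA m]
  have hSrec : ∀ m : ℕ, S (m + 1) = (1 - α / ((m : ℝ) + 1)) * S m := by
    intro m
    have hne : ((m : ℝ) + 1) ≠ 0 := by positivity
    rw [hSsucc m, hgsucc m]
    field_simp
    ring
  -- S (m+1) < 0
  have hSneg : ∀ m : ℕ, S (m + 1) < 0 := by
    intro m
    induction m with
    | zero =>
      rw [hSrec 0, hS0]
      simp
      nlinarith
    | succ n ih =>
      rw [hSrec (n + 1)]
      apply mul_neg_of_pos_of_neg _ ih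
      have : α / ((n : ℝ) + 1 + 1) < 1 := by
        rw [div_lt_one (by positivity)]
        nlinarith [Nat.cast_nonneg (α := ℝ) n]
      push_cast
      linarith
  -- bound : -S (m+1) ≤ 1/(m+1)
  have hSbd : ∀ m : ℕ, -S (m + 1) ≤ 1 / ((m : ℝ) + 1) := by
    intro m
    induction m with
    | zero =>
      rw [hSrec 0, hS0]
      norm_num
      linarith
    | succ n ih =>
      rw [hSrec (n + 1)]
      have hn1 : (0:ℝ) < (n : ℝ) + 1 := by positivity
      have hn2 : (0:ℝ) < (n : ℝ) + 1 + 1 := by positivity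
      push_cast
      have hf1 : (0:ℝ) ≤ 1 - α / ((n : ℝ) + 1 + 1) := by
        have : α / ((n : ℝ) + 1 + 1) ≤ 1 := by
          rw [div_le_one hn2]; nlinarith [Nat.cast_nonneg (α := ℝ) n]
        linarith
      have hf2 : 1 - α / ((n : ℝ) + 1 + 1) ≤ 1 - 1 / ((n : ℝ) + 1 + 1) := by
        have : 1 / ((n : ℝ) + 1 + 1) ≤ α / ((n : ℝ) + 1 + 1) := by
          gcongr
        linarith
      have key : -((1 - α / ((n : ℝ) + 1 + 1)) * S (n + 1))
          = (1 - α / ((n : ℝ) + 1 + 1)) * (-S (n + 1)) := by ring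
      rw [key]
      calc (1 - α / ((n : ℝ) + 1 + 1)) * (-S (n + 1))
          ≤ (1 - 1 / ((n : ℝ) + 1 + 1)) * (1 / ((n : ℝ) + 1)) := by
            apply mul_le_mul hf2 ih (by linarith [hSneg n]) (by linarith [hf2, hf1])
        _ = 1 / ((n : ℝ) + 1 + 1) := by field_simp; ring
  -- S tends to 0
  have hStend : Filter.Tendsto S Filter.atTop (nhds 0) := by
    rw [← Filter.tendsto_add_atTop_iff_nat 1]
    apply squeeze_zero_norm (a := fun m : ℕ => 1 / ((m : ℝ) + 1))
    · intro n
      rw [Real.norm_eq_abs, abs_of_neg (hSneg n)]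
      exact hSbd n
    · exact tendsto_one_div_add_atTop_nhds_zero_nat
  -- formula for partial sums of w
  have hW : ∀ m : ℕ, (∑ k ∈ Finset.range (m + 2), w k)
      = (α / 2) * S (m + 1) + ((2 - α) / 2) * S m := by
    intro m
    induction m with
    | zero =>
      rw [Finset.sum_range_succ, Finset.sum_range_one, hw0, hw 0, hSsucc 0, hS0, hg0]
      ring
    | succ n ih =>
      rw [Finset.sum_range_succ, ih, hw (n + 1), hSsucc (n + 1), hSsucc n]
      ring
  -- partial sums negative for m ≥ 2
  have hWneg : ∀ m : ℕ, 2 ≤ m → (∑ k ∈ Finset.range (m + 1), w k) < 0 := by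
    intro m hm
    obtain ⟨n, rfl⟩ : ∃ n, m = n + 2 := ⟨m - 2, by omega⟩
    have := hW (n + 1)
    rw [show n + 2 + 1 = n + 1 + 2 from rfl, this]
    have h1 := hSneg (n + 1)
    have h2 := hSneg n
    nlinarith
  -- partial sums tend to 0
  have hWt : Filter.Tendsto (fun n => ∑ k ∈ Finset.range n, w k) Filter.atTop (nhds 0) := by
    rw [← Filter.tendsto_add_atTop_iff_nat 2]
    have h1 : Filter.Tendsto (fun m : ℕ => (α / 2) * S (m + 1) + ((2 - α) / 2) * S m)
        Filter.atTop (nhds ((α / 2) * 0 + ((2 - α) / 2) * 0)) := by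
      apply Filter.Tendsto.add
      · exact (Filter.tendsto_add_atTop_iff_nat 1 |>.mpr hStend |>.const_mul _)
        |>.congr (fun n => rfl)
      · exact hStend.const_mul _
    simp only [mul_zero, add_zero] at h1
    exact Filter.Tendsto.congr (fun m => (hW m).symm) h1
  -- positivity of g for k ≥ 2
  have hgpos : ∀ k : ℕ, 0 < g (k + 2) := by
    intro k
    induction k with
    | zero =>
      have h1 := hg 0
      have h2 := hg 1
      simp only [Nat.cast_zero, Nat.cast_one] at h1 h2
      rw [h2, h1, hg0]
      nlinarith
    | succ n ih =>
      have h := hg (n + 2)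
      rw [show n + 1 + 2 = n + 2 + 1 from rfl, h]
      apply mul_pos _ ih
      have : (α + 1) / ((n : ℝ) + 2 + 1) < 1 := by
        rw [div_lt_one (by positivity)]
        nlinarith [Nat.cast_nonneg (α := ℝ) n]
      push_cast
      linarith
  -- w nonneg from index 3
  have hwpos : ∀ k : ℕ, 0 ≤ w (k + 3) := by
    intro k
    have := hw (k + 2)
    rw [show k + 3 = k + 2 + 1 from rfl, this]
    have h1 := hgpos (k + 1)
    have h2 := hgpos k
    rw [show k + 1 + 2 = k + 2 + 1 from rfl] at h1
    nlinarith
  -- shifted partial sums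
  have hshift : ∀ n : ℕ, (∑ k ∈ Finset.range n, w (k + 3))
      = (∑ k ∈ Finset.range (n + 3), w k) - ∑ k ∈ Finset.range 3, w k := by
    intro n
    induction n with
    | zero => simp
    | succ m ih =>
      rw [Finset.sum_range_succ (fun k => w (k + 3)) m, ih,
        show m + 1 + 3 = (m + 3) + 1 from rfl, Finset.sum_range_succ w (m + 3)]
      ring
  -- summability
  have hsummable : Summable w := by
    rw [← summable_nat_add_iff 3]
    apply summable_of_sum_range_le hwpos (c := -(∑ k ∈ Finset.range 3, w k))
    intro n
    rw [hshift n]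
    have := hWneg (n + 2) (by omega)
    rw [show n + 2 + 1 = n + 3 from rfl] at this
    linarith
  have hts : HasSum w (∑' k, w k) := hsummable.hasSum
  have : (∑' k, w k) = 0 := tendsto_nhds_unique hts.tendsto_sum_nat hWt
  rw [this] at hts
  exact ⟨hts, hWneg⟩
end

section
/- For real α with 1 < α < 2, the WSGD weights for (p,q) = (1,-1), defined by w_k = ((α+2)/4) g_k for k = 0,1 and w_k = ((α+2)/4) g_k + ((2-α)/4) g_{k-2} for k ≥ 2, satisfy w₀ = (α+2)/4 > 0, w₁ = -α(α+2)/4 < 0, and w₂ = (α³ + α² - 4α + 4)/8 > 0. -/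
/-- For α ∈ (1,2), the WSGD weights for (p,q)=(1,-1), defined by
w_k = ((α+2)/4)g_k for k = 0,1 and w_k = ((α+2)/4)g_k + ((2-α)/4)g_{k-2} for
k ≥ 2, satisfy w₀ = (α+2)/4 > 0, w₁ = -α(α+2)/4 < 0, and
w₂ = (α³ + α² - 4α + 4)/8 > 0. -/
theorem wsgd_11_first_weights
    (α : ℝ) (hα1 : 1 < α) (hα2 : α < 2)
    (g w : ℕ → ℝ) (hg0 : g 0 = 1)
    (hg : ∀ k : ℕ, g (k + 1) = (1 - (α + 1) / (k + 1)) * g k)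
    (hw0 : w 0 = ((α + 2) / 4) * g 0)
    (hw1 : w 1 = ((α + 2) / 4) * g 1)
    (hw : ∀ k : ℕ, w (k + 2) = ((α + 2) / 4) * g (k + 2) + ((2 - α) / 4) * g k) :
    w 0 = (α + 2) / 4 ∧ 0 < w 0 ∧
    w 1 = -(α * (α + 2)) / 4 ∧ w 1 < 0 ∧
    w 2 = (α ^ 3 + α ^ 2 - 4 * α + 4) / 8 ∧ 0 < w 2 := by
  have hg1 : g 1 = -α := by have := hg 0; rw [hg0] at this; push_cast at this; linarith
  have hg2 : g 2 = α * (α - 1) / 2 := by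
    have := hg 1; rw [hg1] at this; push_cast at this; rw [this]; ring
  have hw2 := hw 0
  rw [hg0, hg2] at hw2
  refine ⟨by rw [hw0, hg0]; ring, by rw [hw0, hg0]; nlinarith,
    by rw [hw1, hg1]; ring, by rw [hw1, hg1]; nlinarith,
    by rw [hw2]; ring, by rw [hw2]; nlinarith [sq_nonneg (α - 1), sq_nonneg α]⟩
end

section
/- Let f: [-π,π] → ℝ be a continuous even function, and for each M let T_M(f) be the M×M symmetric Toeplitz matrix with entries (T_M(f))_{jk} = c_{j-k}, where c_n = (1/2π)∫_{-π}^{π} f(x) e^{-inx} dx. If ess inf f < ess sup f, then every eigenvalue λ of T_M(f) satisfies inf f < λ < sup f. -/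
open Real

open MeasureTheory

lemma intervalIntegrable_sum' {ι : Type*} (s : Finset ι) {F : ι → ℝ → ℝ}
    (h : ∀ i ∈ s, IntervalIntegrable (F i) volume (-π) π) :
    IntervalIntegrable (fun x => ∑ i ∈ s, F i x) volume (-π) π := by
  have h2 := IntervalIntegrable.sum s h
  have h3 : (∑ i ∈ s, F i) = fun x => ∑ i ∈ s, F i x := by
    funext x
    exact Finset.sum_apply x s F
  rwa [h3] at h2


lemma integral_cos_int_mul (n : ℤ) :
    ∫ x in (-π)..π, Real.cos (n * x) = if n = 0 then 2 * π else 0 := by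
  by_cases hn : n = 0
  · simp [hn, two_mul]
  · have h : (n : ℝ) ≠ 0 := Int.cast_ne_zero.mpr hn
    rw [if_neg hn, intervalIntegral.integral_comp_mul_left Real.cos h]
    simp [integral_cos, Real.sin_int_mul_pi, mul_neg, Real.sin_neg]



lemma key_pos (M : ℕ) (v : Fin M → ℝ) (hv : v ≠ 0) (g : ℝ → ℝ)
    (hg : ContinuousOn g (Set.Icc (-π) π))
    (hg0 : ∀ x ∈ Set.Icc (-π) π, 0 ≤ g x)
    (x₁ : ℝ) (hx₁ : x₁ ∈ Set.Icc (-π) π) (hgx₁ : 0 < g x₁) :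
    0 < ∫ x in (-π)..π, g x *
      ((∑ j : Fin M, v j * Real.cos ((j : ℕ) * x)) ^ 2
        + (∑ j : Fin M, v j * Real.sin ((j : ℕ) * x)) ^ 2) := by
  have hpi : -π < π := by linarith [Real.pi_pos]
  set Cf : ℝ → ℝ := fun x => ∑ j : Fin M, v j * Real.cos ((j : ℕ) * x) with hCf
  set Sf : ℝ → ℝ := fun x => ∑ j : Fin M, v j * Real.sin ((j : ℕ) * x) with hSf
  set P : ℝ → ℝ := fun x => Cf x ^ 2 + Sf x ^ 2 with hP
  have hCcont : Continuous Cf := by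
    apply continuous_finset_sum
    intro j _
    exact continuous_const.mul (Real.continuous_cos.comp (continuous_const.mul continuous_id))
  have hScont : Continuous Sf := by
    apply continuous_finset_sum
    intro j _
    exact continuous_const.mul (Real.continuous_sin.comp (continuous_const.mul continuous_id))
  have hPcont : Continuous P := (hCcont.pow 2).add (hScont.pow 2)
  have hPnn : ∀ x, 0 ≤ P x := fun x => by positivity
  -- the polynomial
  set p : Polynomial ℂ := ∑ j : Fin M, Polynomial.C (v j : ℂ) * Polynomial.X ^ (j : ℕ) with hpdef
  obtain ⟨j₀, hj₀⟩ : ∃ j, v j ≠ 0 := by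
    by_contra h
    push_neg at h
    exact hv (funext h)
  have hp0 : p ≠ 0 := by
    intro h
    apply hj₀
    have hcoeff : p.coeff (j₀ : ℕ) = (v j₀ : ℂ) := by
      rw [hpdef, Polynomial.finset_sum_coeff]
      rw [Finset.sum_eq_single j₀]
      · simp
      · intro j _ hj
        have : (j₀ : ℕ) ≠ (j : ℕ) := fun he => hj (Fin.val_injective he).symm
        simp [Polynomial.coeff_X_pow, this]
      · simp
    rw [h] at hcoeff
    simpa using hcoeff.symm
  have heval : ∀ x : ℝ, p.eval (Complex.exp (x * Complex.I))
      = (Cf x : ℂ) + (Sf x : ℂ) * Complex.I := by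
    intro x
    rw [hpdef, Polynomial.eval_finset_sum, hCf, hSf]
    push_cast
    rw [Finset.sum_mul, ← Finset.sum_add_distrib]
    refine Finset.sum_congr rfl fun j _ => ?_
    rw [Polynomial.eval_mul, Polynomial.eval_pow, Polynomial.eval_C, Polynomial.eval_X,
      ← Complex.exp_nat_mul]
    have h1 : (j : ℕ) * (x * Complex.I) = ((((j : ℕ) : ℝ) * x : ℝ) : ℂ) * Complex.I := by
      push_cast; ring
    rw [h1, Complex.exp_mul_I]
    push_cast
    ring
  -- zero set of P is finite in Ioo
  set e : ℝ → ℂ := fun x => Complex.exp (x * Complex.I) with he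
  set Z : Set ℝ := Set.Ioo (-π) π ∩ e ⁻¹' {z | p.IsRoot z} with hZ
  have hinj : Set.InjOn e (Set.Ioo (-π) π) := by
    intro x hx y hy hxy
    rw [he] at hxy
    simp only at hxy
    obtain ⟨n, hn⟩ := Complex.exp_eq_exp_iff_exists_int.mp hxy
    have him : x = y + n * (2 * π) := by
      have := congrArg Complex.im hn
      simpa using this
    have h1 : -(1:ℝ) < n := by
      rcases hx with ⟨hx1, hx2⟩; rcases hy with ⟨hy1, hy2⟩
      nlinarith [Real.pi_pos]
    have h2 : (n:ℝ) < 1 := by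
      rcases hx with ⟨hx1, hx2⟩; rcases hy with ⟨hy1, hy2⟩
      nlinarith [Real.pi_pos]
    have hn1 : (-1:ℤ) < n := by exact_mod_cast h1
    have hn2 : n < (1:ℤ) := by exact_mod_cast h2
    have : n = 0 := by omega
    rw [this] at him
    simpa using him
  have hZfin : Z.Finite := by
    apply Set.Finite.of_finite_image _ (hinj.mono (by rw [hZ]; exact Set.inter_subset_left))
    exact (Polynomial.finite_setOf_isRoot hp0).subset (by
      rintro z ⟨x, hx, rfl⟩
      exact hx.2)
  have hPposZ : ∀ x ∈ Set.Ioo (-π) π, x ∉ Z → 0 < P x := by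
    intro x hx hxZ
    rcases (hPnn x).lt_or_eq with h | h
    · exact h
    · exfalso
      apply hxZ
      refine ⟨hx, ?_⟩
      simp only [hP] at h
      have hC : Cf x = 0 := by nlinarith [sq_nonneg (Cf x), sq_nonneg (Sf x)]
      have hS : Sf x = 0 := by nlinarith [sq_nonneg (Cf x), sq_nonneg (Sf x)]
      show p.IsRoot (e x)
      unfold Polynomial.IsRoot
      rw [he]
      simp only
      rw [heval x, hC, hS]
      simp
  -- nonempty open set where g > 0
  set U : Set ℝ := Set.Ioo (-π) π ∩ g ⁻¹' Set.Ioi 0 with hU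
  have hUopen : IsOpen U :=
    (hg.mono Set.Ioo_subset_Icc_self).isOpen_inter_preimage isOpen_Ioo isOpen_Ioi
  have hUne : U.Nonempty := by
    have hcl : x₁ ∈ closure (Set.Ioo (-π) π) := by
      rw [closure_Ioo hpi.ne]; exact hx₁
    have hnbot : (nhdsWithin x₁ (Set.Ioo (-π) π)).NeBot :=
      mem_closure_iff_nhdsWithin_neBot.mp hcl
    have hmem : g ⁻¹' Set.Ioi 0 ∈ nhdsWithin x₁ (Set.Icc (-π) π) :=
      (hg x₁ hx₁).preimage_mem_nhdsWithin (Ioi_mem_nhds hgx₁)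
    have hmem' : g ⁻¹' Set.Ioi 0 ∈ nhdsWithin x₁ (Set.Ioo (-π) π) :=
      nhdsWithin_mono x₁ Set.Ioo_subset_Icc_self hmem
    have := Filter.inter_mem self_mem_nhdsWithin hmem'
    exact Filter.nonempty_of_mem this
  have hUpos : (0:ENNReal) < volume U := hUopen.measure_pos volume hUne
  have hUZpos : (0:ENNReal) < volume (U \ Z) := by
    rw [measure_diff_null (hZfin.measure_zero volume)]
    exact hUpos
  -- conclude
  set h : ℝ → ℝ := fun x => g x * P x with hh
  have hhcont : ContinuousOn h (Set.Icc (-π) π) := hg.mul hPcont.continuousOn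
  have hhint : IntegrableOn h (Set.Ioc (-π) π) volume :=
    (hhcont.integrableOn_Icc).mono_set Set.Ioc_subset_Icc_self
  have hae : 0 ≤ᵐ[volume.restrict (Set.Ioc (-π) π)] h := by
    filter_upwards [ae_restrict_mem measurableSet_Ioc] with x hx
    exact mul_nonneg (hg0 x (Set.Ioc_subset_Icc_self hx)) (hPnn x)
  have hsub : U \ Z ⊆ Function.support h ∩ Set.Ioc (-π) π := by
    rintro x ⟨⟨hx1, hx2⟩, hxZ⟩
    refine ⟨?_, Set.Ioo_subset_Ioc_self hx1⟩
    have hgpos : 0 < g x := hx2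
    have hPpos : 0 < P x := hPposZ x hx1 hxZ
    exact ne_of_gt (mul_pos hgpos hPpos)
  rw [intervalIntegral.integral_of_le hpi.le]
  have : (0:ℝ) < ∫ x in Set.Ioc (-π) π, h x := by
    rw [MeasureTheory.setIntegral_pos_iff_support_of_nonneg_ae hae hhint]
    exact lt_of_lt_of_le hUZpos (measure_mono hsub)
  exact this

set_option maxHeartbeats 1600000 in
/-- Let f : [-π,π] → ℝ be continuous and even, and T_M(f) the M×M
symmetric Toeplitz matrix with entries c_{j-k}, where c_n are the Fourier
coefficients of f (which are real since f is even). If f is non-constant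
(inf f < sup f), then every eigenvalue λ of T_M(f) satisfies
inf f < λ < sup f. -/
theorem toeplitz_eigenvalue_localization
    (f : ℝ → ℝ) (hf : ContinuousOn f (Set.Icc (-π) π))
    (hfe : ∀ x : ℝ, f (-x) = f x)
    (c : ℤ → ℝ)
    (hc : ∀ n : ℤ, c n = (1 / (2 * π)) * ∫ x in (-π)..π, f x * Real.cos (n * x))
    (hne : ∃ x ∈ Set.Icc (-π) π, ∃ y ∈ Set.Icc (-π) π, f x ≠ f y)
    (M : ℕ) (hM : 1 ≤ M)
    (T : Matrix (Fin M) (Fin M) ℝ)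
    (hT : ∀ j k : Fin M, T j k = c ((j : ℤ) - (k : ℤ)))
    (μ : ℝ) (v : Fin M → ℝ) (hv : v ≠ 0) (heig : T.mulVec v = μ • v) :
    sInf (f '' Set.Icc (-π) π) < μ ∧ μ < sSup (f '' Set.Icc (-π) π) := by
  have hpi : -π < π := by linarith [Real.pi_pos]
  have hπ0 : π ≠ 0 := Real.pi_ne_zero
  have huIcc : Set.uIcc (-π) π = Set.Icc (-π) π := Set.uIcc_of_le hpi.le
  have hIcc : ∀ (h : ℝ → ℝ), ContinuousOn h (Set.Icc (-π) π) →
      IntervalIntegrable h volume (-π) π := by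
    intro h hh
    apply ContinuousOn.intervalIntegrable
    rwa [huIcc]
  set Cf : ℝ → ℝ := fun x => ∑ j : Fin M, v j * Real.cos ((j : ℕ) * x) with hCf
  set Sf : ℝ → ℝ := fun x => ∑ j : Fin M, v j * Real.sin ((j : ℕ) * x) with hSf
  set P : ℝ → ℝ := fun x => Cf x ^ 2 + Sf x ^ 2 with hP
  have hCcont : Continuous Cf := by
    apply continuous_finset_sum
    intro j _
    exact continuous_const.mul (Real.continuous_cos.comp (continuous_const.mul continuous_id))
  have hScont : Continuous Sf := by
    apply continuous_finset_sum
    intro j _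
    exact continuous_const.mul (Real.continuous_sin.comp (continuous_const.mul continuous_id))
  have hPcont : Continuous P := (hCcont.pow 2).add (hScont.pow 2)
  -- the key trig identity
  have hkey : ∀ x : ℝ, (∑ j : Fin M, ∑ k : Fin M,
      v j * v k * Real.cos ((((j : ℤ) - (k : ℤ)) : ℤ) * x)) = P x := by
    intro x
    have hjk : ∀ j k : Fin M, ((((j : ℤ) - (k : ℤ)) : ℤ) : ℝ) * x
        = ((j : ℕ) : ℝ) * x - ((k : ℕ) : ℝ) * x := by
      intro j k; push_cast; ring
    simp only [hjk, Real.cos_sub]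
    rw [hP]
    simp only [hCf, hSf]
    rw [pow_two, pow_two, Finset.sum_mul_sum, Finset.sum_mul_sum, ← Finset.sum_add_distrib]
    refine Finset.sum_congr rfl fun j _ => ?_
    rw [← Finset.sum_add_distrib]
    refine Finset.sum_congr rfl fun k _ => ?_
    ring
  -- integrability helpers
  have hterm : ∀ (a : ℝ) (n : ℤ), IntervalIntegrable
      (fun x => a * (f x * Real.cos (n * x))) volume (-π) π := by
    intro a n
    apply hIcc
    exact continuousOn_const.mul (hf.mul
      ((Real.continuous_cos.comp (continuous_const.mul continuous_id)).continuousOn))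
  have hcos : ∀ (a : ℝ) (n : ℤ), IntervalIntegrable
      (fun x => a * Real.cos (n * x)) volume (-π) π := by
    intro a n
    apply hIcc
    exact continuousOn_const.mul
      ((Real.continuous_cos.comp (continuous_const.mul continuous_id)).continuousOn)
  -- quadratic form equals integral of f * P
  have hQF : (∑ j : Fin M, ∑ k : Fin M, v j * v k * c ((j : ℤ) - (k : ℤ)))
      = (1 / (2 * π)) * ∫ x in (-π)..π, f x * P x := by
    have h1 : ∀ j k : Fin M, v j * v k * c ((j : ℤ) - (k : ℤ))
        = (1 / (2 * π)) * ∫ x in (-π)..π,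
            v j * v k * (f x * Real.cos ((((j : ℤ) - (k : ℤ)) : ℤ) * x)) := by
      intro j k
      rw [hc, intervalIntegral.integral_const_mul]
      ring
    simp only [h1, ← Finset.mul_sum]
    congr 1
    have hswap : ∀ j : Fin M,
        (∑ k : Fin M, ∫ x in (-π)..π,
          v j * v k * (f x * Real.cos ((((j : ℤ) - (k : ℤ)) : ℤ) * x)))
        = ∫ x in (-π)..π, ∑ k : Fin M,
            v j * v k * (f x * Real.cos ((((j : ℤ) - (k : ℤ)) : ℤ) * x)) :=
      fun j => (intervalIntegral.integral_finset_sum (fun k _ => hterm _ _)).symm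
    simp only [hswap]
    have hout : (∫ x in (-π)..π, ∑ j : Fin M, ∑ k : Fin M,
        v j * v k * (f x * Real.cos ((((j : ℤ) - (k : ℤ)) : ℤ) * x)))
        = ∑ j : Fin M, ∫ x in (-π)..π, ∑ k : Fin M,
            v j * v k * (f x * Real.cos ((((j : ℤ) - (k : ℤ)) : ℤ) * x)) := by
      apply intervalIntegral.integral_finset_sum
      intro j _
      exact intervalIntegrable_sum' _ (fun k _ => hterm _ _)
    rw [← hout]
    apply intervalIntegral.integral_congr
    intro x _
    dsimp only
    rw [← hkey x, Finset.mul_sum]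
    refine Finset.sum_congr rfl fun j _ => ?_
    rw [Finset.mul_sum]
    refine Finset.sum_congr rfl fun k _ => ?_
    ring
  -- normalization: integral of P
  have hnorm : (∫ x in (-π)..π, P x) = 2 * π * ∑ j : Fin M, v j ^ 2 := by
    have h1 : (∫ x in (-π)..π, P x) = ∑ j : Fin M, ∑ k : Fin M,
        v j * v k * (if ((j : ℤ) - (k : ℤ)) = 0 then 2 * π else 0) := by
      rw [show (fun x => P x) = fun x => ∑ j : Fin M, ∑ k : Fin M,
          v j * v k * Real.cos ((((j : ℤ) - (k : ℤ)) : ℤ) * x) from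
        funext fun x => (hkey x).symm]
      have hout2 : (∫ x in (-π)..π, ∑ j : Fin M, ∑ k : Fin M,
          v j * v k * Real.cos ((((j : ℤ) - (k : ℤ)) : ℤ) * x))
          = ∑ j : Fin M, ∫ x in (-π)..π, ∑ k : Fin M,
              v j * v k * Real.cos ((((j : ℤ) - (k : ℤ)) : ℤ) * x) := by
        apply intervalIntegral.integral_finset_sum
        intro j _
        exact intervalIntegrable_sum' _ (fun k _ => hcos _ _)
      rw [hout2]
      refine Finset.sum_congr rfl fun j _ => ?_
      rw [intervalIntegral.integral_finset_sum (fun k _ => hcos _ _)]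
      refine Finset.sum_congr rfl fun k _ => ?_
      rw [intervalIntegral.integral_const_mul, integral_cos_int_mul]
    rw [h1]
    have h2 : ∀ j : Fin M, (∑ k : Fin M,
        v j * v k * (if ((j : ℤ) - (k : ℤ)) = 0 then 2 * π else 0)) = v j ^ 2 * (2 * π) := by
      intro j
      rw [Finset.sum_eq_single j]
      · simp [pow_two]
      · intro k _ hkj
        have : ((j : ℤ) - (k : ℤ)) ≠ 0 := by
          intro h
          apply hkj
          have : (j : ℤ) = (k : ℤ) := by linarith [sub_eq_zero.mp h]
          exact (Fin.ext (by exact_mod_cast this)).symm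
        simp [this]
      · simp
    simp only [h2]
    rw [← Finset.sum_mul]
    ring
  -- eigenvalue equation
  have hEig : (∑ j : Fin M, ∑ k : Fin M, v j * v k * c ((j : ℤ) - (k : ℤ)))
      = μ * ∑ j : Fin M, v j ^ 2 := by
    have h1 : ∀ j : Fin M, T.mulVec v j = μ * v j := by
      intro j
      rw [heig]
      simp
    calc (∑ j : Fin M, ∑ k : Fin M, v j * v k * c ((j : ℤ) - (k : ℤ)))
        = ∑ j : Fin M, v j * (T.mulVec v j) := by
          refine Finset.sum_congr rfl fun j _ => ?_
          simp only [Matrix.mulVec, dotProduct, Finset.mul_sum]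
          refine Finset.sum_congr rfl fun k _ => ?_
          rw [hT]
          ring
      _ = ∑ j : Fin M, v j * (μ * v j) := by simp only [h1]
      _ = μ * ∑ j : Fin M, v j ^ 2 := by
          rw [Finset.mul_sum]
          refine Finset.sum_congr rfl fun j _ => ?_
          ring
  obtain ⟨j₀, hj₀⟩ : ∃ j, v j ≠ 0 := by
    by_contra h
    push_neg at h
    exact hv (funext h)
  have hsumpos : 0 < ∑ j : Fin M, v j ^ 2 :=
    Finset.sum_pos' (fun j _ => sq_nonneg _) ⟨j₀, Finset.mem_univ _, by positivity⟩
  -- extrema of f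
  have hicc_ne : (Set.Icc (-π) π).Nonempty := Set.nonempty_Icc.mpr hpi.le
  have hcomp : IsCompact (f '' Set.Icc (-π) π) := (isCompact_Icc).image_of_continuousOn hf
  have himg_ne : (f '' Set.Icc (-π) π).Nonempty := hicc_ne.image f
  obtain ⟨xS, hxS, hfxS⟩ := hcomp.sSup_mem himg_ne
  obtain ⟨xm, hxm, hfxm⟩ := hcomp.sInf_mem himg_ne
  have hle : ∀ x ∈ Set.Icc (-π) π, f x ≤ sSup (f '' Set.Icc (-π) π) :=
    fun x hx => le_csSup hcomp.bddAbove ⟨x, hx, rfl⟩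
  have hge : ∀ x ∈ Set.Icc (-π) π, sInf (f '' Set.Icc (-π) π) ≤ f x :=
    fun x hx => csInf_le hcomp.bddBelow ⟨x, hx, rfl⟩
  have hmS : sInf (f '' Set.Icc (-π) π) < sSup (f '' Set.Icc (-π) π) := by
    by_contra h
    push_neg at h
    obtain ⟨x, hx, y, hy, hxy⟩ := hne
    apply hxy
    have h1 : f x = sInf (f '' Set.Icc (-π) π) := le_antisymm (by linarith [hle x hx]) (hge x hx)
    have h2 : f y = sInf (f '' Set.Icc (-π) π) := le_antisymm (by linarith [hle y hy]) (hge y hy)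
    rw [h1, h2]
  -- strict bounds via key_pos
  have hup : 0 < ∫ x in (-π)..π, (sSup (f '' Set.Icc (-π) π) - f x) * P x := by
    apply key_pos M v hv _ (continuousOn_const.sub hf)
      (fun x hx => sub_nonneg.mpr (hle x hx)) xm hxm
    simp only [Pi.sub_apply]
    rw [hfxm]
    linarith
  have hlo : 0 < ∫ x in (-π)..π, (f x - sInf (f '' Set.Icc (-π) π)) * P x := by
    apply key_pos M v hv _ (hf.sub continuousOn_const)
      (fun x hx => sub_nonneg.mpr (hge x hx)) xS hxS
    simp only [Pi.sub_apply]
    rw [hfxS]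
    linarith
  have hfP : IntervalIntegrable (fun x => f x * P x) volume (-π) π :=
    hIcc _ (hf.mul hPcont.continuousOn)
  have hPint : IntervalIntegrable P volume (-π) π := hIcc _ hPcont.continuousOn
  have hsplitS : (∫ x in (-π)..π, (sSup (f '' Set.Icc (-π) π) - f x) * P x)
      = sSup (f '' Set.Icc (-π) π) * (∫ x in (-π)..π, P x) - ∫ x in (-π)..π, f x * P x := by
    rw [← intervalIntegral.integral_const_mul, ← intervalIntegral.integral_sub
      (hIcc (fun x => sSup (f '' Set.Icc (-π) π) * P x) (continuousOn_const.mul hPcont.continuousOn)) hfP]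
    apply intervalIntegral.integral_congr
    intro x _
    ring
  have hsplitm : (∫ x in (-π)..π, (f x - sInf (f '' Set.Icc (-π) π)) * P x)
      = (∫ x in (-π)..π, f x * P x) - sInf (f '' Set.Icc (-π) π) * ∫ x in (-π)..π, P x := by
    rw [← intervalIntegral.integral_const_mul, ← intervalIntegral.integral_sub hfP
      (hIcc (fun x => sInf (f '' Set.Icc (-π) π) * P x) (continuousOn_const.mul hPcont.continuousOn))]
    apply intervalIntegral.integral_congr
    intro x _
    ring
  -- combine
  have hB : (∫ x in (-π)..π, f x * P x) = μ * (2 * π * ∑ j : Fin M, v j ^ 2) := by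
    have := hQF.symm.trans hEig
    field_simp at this
    linarith
  have ht : 0 < 2 * π * ∑ j : Fin M, v j ^ 2 := by positivity
  constructor
  · rw [hsplitm, hB, hnorm] at hlo
    nlinarith
  · rw [hsplitS, hB, hnorm] at hup
    nlinarith
end
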